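/- arXiv:math/0203114 — 4 statements merged into one kernel-verified Lean document; each statement's English description precedes it below -/
import Mathlib

section
/- Let f_i = c_i t^{a_i}, 0 ≤ i ≤ n, be n+1 monomials in n variables over the field k, and suppose the i-th monomial factors as a product of two monomials, f_i = f_i'·f_i'', i.e. c_i = c_i'·c_i'' in k^× and a_i = a_i' + a_i'' in ℤ^n. Then the symbol is multiplicative in the i-th entry: [f_0,…,f_i'f_i'',…,f_n] = [f_0,…,f_i',…,f_n] · [f_0,…,f_i'',…,f_n], where on the right-hand side the i-th monomial of the collection is replaced by f_i' (resp. f_i''), all other monomials being unchanged. -/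
/-!
Each factor of the symbol is multiplicative in the `i`-th monomial. The coefficient `cᵢ` is raised
to `±Aᵢ`, which does not involve row `i`. For `j ≠ i` the exponent of `cⱼ` is `±Aⱼ`, a determinant
containing row `i` exactly once, hence additive in that row. Finally every summand
`a_{pk} a_{qk} A^k_{pq}` of `B(A)` contains row `i` exactly once, either as one of the entries
`a_{pk}`, `a_{qk}` or as a row of the minor, so `B(A)` is additive in row `i` as well.
-/

open Matrix

/-- The strictly increasing embedding `Fin m → Fin (m + 2)` that skips the values
of `i` and `j` (for `i < j`): used to delete rows `i` and `j` of a matrix. -/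
def skip2 {m : ℕ} (i j : Fin (m + 2)) (r : Fin m) : Fin (m + 2) :=
  if r.val < i.val then ⟨r.val, by have := r.isLt; omega⟩
  else if r.val + 1 < j.val then ⟨r.val + 1, by have := r.isLt; omega⟩
  else ⟨r.val + 2, by have := r.isLt; omega⟩

/-- `B(A) = Σ_k Σ_{i<j} a_{ik} a_{jk} A^k_{ij}`, where `A^k_{ij}` is the determinant of
the matrix obtained from `A` by deleting rows `i`, `j` and column `k`. -/
def Bcoef {m : ℕ} (A : Matrix (Fin (m + 2)) (Fin (m + 1)) ℤ) : ℤ :=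
  ∑ c : Fin (m + 1), ∑ i : Fin (m + 2), ∑ j : Fin (m + 2),
    if i < j then A i c * A j c * (A.submatrix (skip2 i j) c.succAbove).det else 0

/-- The symbol `[c₀ t^{a₀}, …, c_{n} t^{a_n}] = (-1)^{B(A)} ∏ᵢ cᵢ^{(-1)ⁱ Aᵢ}` of `n + 1`
monomials in `n` variables (here `n = m + 1`), where `Aᵢ` is the determinant of the matrix
obtained from the exponent matrix `A` by deleting its `i`-th row. -/
def monomialSymbol {k : Type*} [Field k] {m : ℕ}
    (c : Fin (m + 2) → kˣ) (A : Matrix (Fin (m + 2)) (Fin (m + 1)) ℤ) : kˣ :=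
  (-1) ^ Bcoef A *
    ∏ i : Fin (m + 2), c i ^ ((-1 : ℤ) ^ (i : ℕ) * (A.submatrix i.succAbove id).det)

namespace Matrix

variable {l m n o R : Type*}

theorem submatrix_updateRow_of_notMem_range [DecidableEq m] (A : Matrix m n R) (f : l → m)
    (g : o → n) {i : m} (hi : i ∉ Set.range f) (b : n → R) :
    (A.updateRow i b).submatrix f g = A.submatrix f g := by
  ext s t
  rw [submatrix_apply, updateRow_ne fun h => hi ⟨s, h⟩, submatrix_apply]

theorem submatrix_updateRow_of_injective [DecidableEq l] [DecidableEq m] (A : Matrix m n R)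
    {f : l → m} (hf : f.Injective) (g : o → n) (r : l) (b : n → R) :
    (A.updateRow (f r) b).submatrix f g = (A.submatrix f g).updateRow r (b ∘ g) := by
  ext s t
  rcases eq_or_ne s r with rfl | hs
  · simp
  · simp [updateRow_ne hs, updateRow_ne (hf.ne hs)]

theorem det_submatrix_eq_add_of_row_eq_add [Fintype l] [DecidableEq l] [DecidableEq m]
    [CommRing R] (A : Matrix m n R) {f : l → m} (hf : f.Injective) (g : l → n) {i : m}
    (hi : i ∈ Set.range f) {u v : n → R} (huv : A i = u + v) :
    (A.submatrix f g).det =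
      ((A.updateRow i u).submatrix f g).det + ((A.updateRow i v).submatrix f g).det := by
  obtain ⟨r, rfl⟩ := hi
  conv_lhs => rw [← updateRow_eq_self A (f r), huv]
  simp only [submatrix_updateRow_of_injective A hf]
  exact det_updateRow_add _ r (u ∘ g) (v ∘ g)

end Matrix

section Skip2

variable {m : ℕ}

theorem skip2_injective (i j : Fin (m + 2)) : Function.Injective (skip2 i j) := by
  intro r s h
  simp only [skip2] at h
  ext
  split_ifs at h <;> simp only [Fin.mk.injEq] at h <;> omega

theorem range_skip2 {i j : Fin (m + 2)} (hij : i < j) : Set.range (skip2 i j) = {i, j}ᶜ := by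
  rw [Fin.lt_def] at hij
  ext t
  simp only [Set.mem_range, Set.mem_compl_iff, Set.mem_insert_iff, Set.mem_singleton_iff,
    not_or, ← Fin.val_ne_iff]
  constructor
  · rintro ⟨r, rfl⟩
    simp only [skip2]
    split_ifs <;> simp only <;> omega
  · rintro ⟨hti, htj⟩
    have ht := t.isLt
    refine ⟨⟨if t < i then t else if t < j then t - 1 else t - 2, by split_ifs <;> omega⟩, ?_⟩
    simp only [skip2]
    ext
    split_ifs <;> simp_all <;> omega

end Skip2

section RowAdditivity

variable {m : ℕ} {A : Matrix (Fin (m + 2)) (Fin (m + 1)) ℤ} {i : Fin (m + 2)}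
  {a' a'' : Fin (m + 1) → ℤ}

theorem det_submatrix_succAbove_add (ha : A i = a' + a'') {j : Fin (m + 2)} (hj : j ≠ i) :
    (A.submatrix j.succAbove id).det =
      ((A.updateRow i a').submatrix j.succAbove id).det +
        ((A.updateRow i a'').submatrix j.succAbove id).det :=
  det_submatrix_eq_add_of_row_eq_add A Fin.succAbove_right_injective id
    (by rwa [Fin.range_succAbove, Set.mem_compl_singleton_iff, ne_comm]) ha

theorem Bcoef_summand_add (ha : A i = a' + a'') (c : Fin (m + 1)) {p q : Fin (m + 2)}
    (hpq : p < q) :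
    A p c * A q c * (A.submatrix (skip2 p q) c.succAbove).det =
      A.updateRow i a' p c * A.updateRow i a' q c *
          ((A.updateRow i a').submatrix (skip2 p q) c.succAbove).det +
        A.updateRow i a'' p c * A.updateRow i a'' q c *
          ((A.updateRow i a'').submatrix (skip2 p q) c.succAbove).det := by
  by_cases hi : i ∈ Set.range (skip2 p q)
  · have hip : p ≠ i := by rintro rfl; simp [range_skip2 hpq] at hi
    have hiq : q ≠ i := by rintro rfl; simp [range_skip2 hpq] at hi
    rw [det_submatrix_eq_add_of_row_eq_add A (skip2_injective p q) _ hi ha]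
    simp only [updateRow_ne hip, updateRow_ne hiq]
    ring
  · simp only [submatrix_updateRow_of_notMem_range _ _ _ hi]
    have hac : A i c = a' c + a'' c := congrFun ha c
    rw [range_skip2 hpq, Set.notMem_compl_iff, Set.mem_insert_iff, Set.mem_singleton_iff] at hi
    rcases hi with rfl | rfl
    · simp only [updateRow_self, updateRow_ne hpq.ne', hac]
      ring
    · simp only [updateRow_self, updateRow_ne hpq.ne, hac]
      ring

theorem Bcoef_add (ha : A i = a' + a'') :
    Bcoef A = Bcoef (A.updateRow i a') + Bcoef (A.updateRow i a'') := by
  simp only [Bcoef, ← Finset.sum_add_distrib]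
  refine Finset.sum_congr rfl fun c _ => Finset.sum_congr rfl fun p _ =>
    Finset.sum_congr rfl fun q _ => ?_
  split_ifs with hpq
  · exact Bcoef_summand_add ha c hpq
  · rfl

end RowAdditivity

/-- Multiplicativity of the symbol of monomials in the `i`-th entry: if the `i`-th
monomial factors as `fᵢ = fᵢ' · fᵢ''`, i.e. `cᵢ = cᵢ' · cᵢ''` in `kˣ` and
`aᵢ = aᵢ' + aᵢ''` in `ℤⁿ`, then
`[f₀,…,fᵢ'fᵢ'',…,fₙ] = [f₀,…,fᵢ',…,fₙ] · [f₀,…,fᵢ'',…,fₙ]`. -/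
theorem monomialSymbol_multiplicative {k : Type*} [Field k] {m : ℕ}
    (c : Fin (m + 2) → kˣ) (A : Matrix (Fin (m + 2)) (Fin (m + 1)) ℤ)
    (i : Fin (m + 2)) (c' c'' : kˣ) (a' a'' : Fin (m + 1) → ℤ)
    (hc : c i = c' * c'') (ha : A i = a' + a'') :
    monomialSymbol c A =
      monomialSymbol (Function.update c i c') (A.updateRow i a') *
        monomialSymbol (Function.update c i c'') (A.updateRow i a'') := by
  unfold monomialSymbol
  rw [Bcoef_add ha, _root_.zpow_add, mul_mul_mul_comm, ← Finset.prod_mul_distrib]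
  congr 1
  refine Finset.prod_congr rfl fun j _ => ?_
  rcases eq_or_ne j i with rfl | hj
  · simp only [Function.update_self, submatrix_updateRow_succAbove, hc, mul_zpow]
  · rw [Function.update_of_ne hj, Function.update_of_ne hj, det_submatrix_succAbove_add ha hj,
      mul_add, _root_.zpow_add]
end

section
/- Let f_i = c_i t^{a_i}, 0 ≤ i ≤ n, be n+1 monomials in n variables over the field k, and let Q be an n×n integer matrix with det Q = 1 or det Q = −1 (i.e. Q ∈ GL(n,ℤ)), corresponding to the monomial change of coordinates u = t^Q. Then the symbol transforms by the power det Q: if f̄_i = c_i t^{a_i Q} denotes the monomial with coefficient c_i and exponent row a_i Q (so that the exponent matrix of the collection f̄_0,…,f̄_n is the matrix product A·Q), then [f̄_0,…,f̄_n] = [f_0,…,f_n]^{det Q}. -/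
open Matrix

lemma succAbove_succAbove {m : ℕ} (i : Fin (m + 2)) (r : Fin (m + 1)) (s : Fin m) :
    i.succAbove (r.succAbove s) =
      if i.succAbove r < i then skip2 (i.succAbove r) i s else skip2 i (i.succAbove r) s := by
  simp only [Fin.succAbove, skip2, Fin.lt_def, Fin.ext_iff, Fin.coe_castSucc, Fin.val_succ]
  split_ifs <;> simp_all [Fin.lt_def, Fin.ext_iff] <;> omega

namespace SymAux
variable {m : ℕ}

lemma neg_one_pow (n : ℕ) : ((-1 : ZMod 2) ^ n) = 1 := by
  rw [show (-1 : ZMod 2) = 1 by decide, one_pow]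

/-- symmetric deleted-rows minor -/
def Dsym (A : Matrix (Fin (m + 2)) (Fin (m + 1)) (ZMod 2)) (i j : Fin (m + 2)) (q : Fin (m + 1)) :
    ZMod 2 :=
  if i < j then (A.submatrix (skip2 i j) q.succAbove).det
  else (A.submatrix (skip2 j i) q.succAbove).det

/-- L1: column expansion mod 2 -/
lemma expand_col (A : Matrix (Fin (m + 2)) (Fin (m + 1)) (ZMod 2)) (i : Fin (m + 2))
    (q : Fin (m + 1)) :
    (A.submatrix i.succAbove id).det
      = ∑ r : Fin (m + 1), A (i.succAbove r) q * Dsym A i (i.succAbove r) q := by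
  rw [Matrix.det_succ_column (A.submatrix i.succAbove id) q]
  refine Finset.sum_congr rfl fun r _ => ?_
  rw [neg_one_pow, one_mul, Matrix.submatrix_apply, id_eq, Matrix.submatrix_submatrix]
  congr 1
  rw [Dsym]
  have hne : i.succAbove r ≠ i := Fin.succAbove_ne i r
  rw [Function.id_comp]
  by_cases h : i < i.succAbove r
  · rw [if_pos h]
    have hf : i.succAbove ∘ r.succAbove = skip2 i (i.succAbove r) :=
      funext fun s => by rw [Function.comp_apply, succAbove_succAbove, if_neg (not_lt.2 h.le)]
    rw [hf]
  · rw [if_neg h]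
    have hlt : i.succAbove r < i := lt_of_le_of_ne (not_lt.1 h) hne
    have hf : i.succAbove ∘ r.succAbove = skip2 (i.succAbove r) i :=
      funext fun s => by rw [Function.comp_apply, succAbove_succAbove, if_pos hlt]
    rw [hf]

/-- L2: sum of column p entries times maximal minors vanishes mod 2 -/
lemma sum_col_minor (A : Matrix (Fin (m + 2)) (Fin (m + 1)) (ZMod 2)) (p : Fin (m + 1)) :
    ∑ i : Fin (m + 2), A i p * (A.submatrix i.succAbove id).det = 0 := by
  set Mh : Matrix (Fin (m + 2)) (Fin (m + 2)) (ZMod 2) :=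
    Matrix.of (fun r => Fin.snoc (A r) (A r p)) with hMh
  have h0 : Mh.det = 0 := by
    refine Matrix.det_zero_of_column_eq (i := p.castSucc) (j := Fin.last (m + 1)) ?_ fun k => ?_
    · exact (Fin.castSucc_lt_last p).ne
    · simp [hMh]
  rw [Matrix.det_succ_column Mh (Fin.last (m + 1))] at h0
  rw [← h0]
  refine Finset.sum_congr rfl fun i _ => ?_
  rw [neg_one_pow, one_mul]
  congr 1
  · simp [hMh]
  · congr 1
    ext r s
    simp [hMh, Fin.succAbove_last]


lemma mul_transvection_apply' {n₀ : ℕ} {n : Type*} [DecidableEq n] [Fintype n]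
    (A : Matrix (Fin n₀) n (ZMod 2)) (p q : n) (c : ZMod 2) (a : Fin n₀) (b : n) :
    (A * transvection p q c) a b = A a b + if b = q then c * A a p else 0 := by
  rw [Matrix.transvection, Matrix.mul_add, Matrix.mul_one, Matrix.add_apply]
  congr 1
  rw [Matrix.mul_apply]
  simp only [Matrix.single, Matrix.of_apply, ite_and, mul_ite, mul_zero]
  by_cases hb : b = q
  · simp [hb, eq_comm, mul_comm]
  · rw [if_neg hb]
    refine Finset.sum_eq_zero fun x _ => ?_
    rw [if_neg (fun h : q = b => hb h.symm)]
    simp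


lemma det_submatrix_of_range_eq {ι : Type*} [Fintype ι] [DecidableEq ι] {κ : Type*}
    (B : Matrix ι κ (ZMod 2)) (g h : ι → κ)
    (hg : Function.Injective g) (hh : Function.Injective h)
    (hr : Set.range g = Set.range h) :
    (B.submatrix id g).det = (B.submatrix id h).det := by
  let e : ι ≃ ι :=
    (Equiv.ofInjective g hg).trans ((Equiv.setCongr hr).trans (Equiv.ofInjective h hh).symm)
  have he : ∀ s, h (e s) = g s := by
    intro s
    show h ((Equiv.ofInjective h hh).symm ⟨g s, hr ▸ Set.mem_range_self s⟩) = g s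
    exact Equiv.apply_ofInjective_symm hh _
  have hBe : B.submatrix id g = (B.submatrix id h).submatrix id e := by
    ext r s
    simp [he s]
  rw [hBe, Matrix.det_permute' e]
  rcases Int.units_eq_one_or (Equiv.Perm.sign e) with hs | hs <;> rw [hs] <;>
    simp [show ((-1 : ZMod 2)) = 1 by decide]

lemma det_sub_transvection {m : ℕ} (A : Matrix (Fin (m + 2)) (Fin (m + 1)) (ZMod 2))
    (p q : Fin (m + 1)) (hpq : p ≠ q) (c : ZMod 2) (S : Fin m → Fin (m + 2)) (k : Fin (m + 1)) :
    ((A * transvection p q c).submatrix S k.succAbove).det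
      = (A.submatrix S k.succAbove).det
        + if k = p then c * (A.submatrix S q.succAbove).det else 0 := by
  by_cases hk : k = q
  · subst hk
    rw [if_neg (Ne.symm hpq), add_zero]
    congr 1
    ext r s
    simp only [Matrix.submatrix_apply]
    rw [mul_transvection_apply', if_neg (Fin.succAbove_ne k s), add_zero]
  · obtain ⟨c₀, hc₀⟩ := Fin.exists_succAbove_eq (show q ≠ k from Ne.symm hk)
    have hupd : (A * transvection p q c).submatrix S k.succAbove
        = Matrix.updateCol (A.submatrix S k.succAbove) c₀
            ((fun r => A (S r) q) + fun r => c * A (S r) p) := by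
      ext r s
      by_cases hs : s = c₀
      · subst hs
        simp only [Matrix.submatrix_apply, Matrix.updateCol_self, hc₀, Pi.add_apply]
        rw [mul_transvection_apply', if_pos rfl]
      · rw [Matrix.updateCol_ne hs, Matrix.submatrix_apply, Matrix.submatrix_apply,
          mul_transvection_apply',
          if_neg (fun h => hs (Fin.succAbove_right_injective (hc₀ ▸ h))), add_zero]
    rw [hupd, Matrix.det_updateCol_add]
    have h1 : Matrix.updateCol (A.submatrix S k.succAbove) c₀ (fun r => A (S r) q)
        = A.submatrix S k.succAbove := by
      have : (fun r => A (S r) q) = fun r => (A.submatrix S k.succAbove) r c₀ := by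
        funext r; simp [hc₀]
      rw [this, Matrix.updateCol_eq_self]
    rw [h1]
    congr 1
    have hsmul : (fun r => c * A (S r) p) = c • (fun r => A (S r) p) := by
      funext r; simp [smul_eq_mul]
    rw [hsmul, Matrix.det_updateCol_smul]
    by_cases hkp : k = p
    · subst hkp
      rw [if_pos rfl]
      congr 1
      set g : Fin m → Fin (m + 1) := Function.update k.succAbove c₀ k with hgdef
      have hgc₀ : g c₀ = k := by simp [g]
      have hgne : ∀ a, a ≠ c₀ → g a = k.succAbove a := fun a ha => Function.update_of_ne ha _ _
      have hupd2 : Matrix.updateCol (A.submatrix S k.succAbove) c₀ (fun r => A (S r) k)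
          = (A.submatrix S id).submatrix id g := by
        ext r s
        by_cases hs : s = c₀
        · subst hs
          simp [g, Matrix.updateCol_self]
        · simp [g, Matrix.updateCol_ne hs, Function.update_of_ne hs]
      have hq' : (A.submatrix S q.succAbove) = (A.submatrix S id).submatrix id q.succAbove := by
        ext r s; simp
      have hginj : Function.Injective g := by
        intro a b hab
        by_cases ha : a = c₀ <;> by_cases hb : b = c₀
        · rw [ha, hb]
        · exfalso; rw [ha, hgc₀, hgne b hb] at hab; exact Fin.succAbove_ne k b hab.symm
        · exfalso; rw [hb, hgc₀, hgne a ha] at hab; exact Fin.succAbove_ne k a hab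
        · rw [hgne a ha, hgne b hb] at hab; exact Fin.succAbove_right_injective hab
      have hrange : Set.range g = Set.range q.succAbove := by
        rw [Fin.range_succAbove]
        ext x
        simp only [Set.mem_range, Set.mem_compl_iff, Set.mem_singleton_iff]
        constructor
        · rintro ⟨s, rfl⟩
          by_cases hs : s = c₀
          · rw [hs, hgc₀]; exact hpq
          · rw [hgne s hs]
            intro h
            exact hs (Fin.succAbove_right_injective (hc₀ ▸ h))
        · intro hx
          by_cases hxk : x = k
          · exact ⟨c₀, by rw [hgc₀, hxk]⟩
          · obtain ⟨z, hz⟩ := Fin.exists_succAbove_eq (show x ≠ k from hxk)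
            have hzc : z ≠ c₀ := fun h => hx (by rw [← hz, h, hc₀])
            exact ⟨z, by rw [hgne z hzc, hz]⟩
      rw [hupd2, hq', det_submatrix_of_range_eq _ g q.succAbove hginj
        Fin.succAbove_right_injective hrange]
    · rw [if_neg hkp]
      obtain ⟨c₁, hc₁⟩ := Fin.exists_succAbove_eq (show p ≠ k from fun h => hkp h.symm)
      have hcc : c₁ ≠ c₀ := fun h => hpq (by rw [← hc₁, h, hc₀])
      have : (fun r => A (S r) p) = fun r => (A.submatrix S k.succAbove) r c₁ :=
        funext fun r => by simp [hc₁]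
      rw [this, Matrix.det_updateCol_eq_zero hcc, mul_zero]

end SymAux

section Core
variable {m : ℕ}
open SymAux

lemma B2_aux_sum (A : Matrix (Fin (m + 2)) (Fin (m + 1)) (ZMod 2)) (p q : Fin (m + 1)) :
    ∑ i : Fin (m + 2), ∑ j : Fin (m + 2),
      (if i < j then (A i p * A j q + A i q * A j p) *
        (A.submatrix (skip2 i j) q.succAbove).det else 0) = 0 := by
  set f : Fin (m + 2) → Fin (m + 2) → ZMod 2 :=
    fun i j => A i p * A j q * Dsym A i j q with hf
  have hsplit : ∑ i : Fin (m + 2), ∑ j : Fin (m + 2),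
      (if i < j then (A i p * A j q + A i q * A j p) *
        (A.submatrix (skip2 i j) q.succAbove).det else 0)
      = (∑ i : Fin (m + 2), ∑ j : Fin (m + 2), if i < j then f i j else 0)
        + ∑ i : Fin (m + 2), ∑ j : Fin (m + 2), if i < j then f j i else 0 := by
    rw [← Finset.sum_add_distrib]
    refine Finset.sum_congr rfl fun i _ => ?_
    rw [← Finset.sum_add_distrib]
    refine Finset.sum_congr rfl fun j _ => ?_
    by_cases h : i < j
    · rw [if_pos h, if_pos h, if_pos h, hf]
      simp only [Dsym, if_pos h, if_neg (asymm h)]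
      ring
    · rw [if_neg h, if_neg h, if_neg h, add_zero]
  have hswap : (∑ i : Fin (m + 2), ∑ j : Fin (m + 2), if i < j then f j i else 0)
      = ∑ i : Fin (m + 2), ∑ j : Fin (m + 2), if j < i then f i j else 0 :=
    Finset.sum_comm
  have hcomb : ((∑ i : Fin (m + 2), ∑ j : Fin (m + 2), if i < j then f i j else 0)
        + ∑ i : Fin (m + 2), ∑ j : Fin (m + 2), if j < i then f i j else 0)
      = ∑ i : Fin (m + 2), ∑ j : Fin (m + 2), if j = i then 0 else f i j := by
    rw [← Finset.sum_add_distrib]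
    refine Finset.sum_congr rfl fun i _ => ?_
    rw [← Finset.sum_add_distrib]
    refine Finset.sum_congr rfl fun j _ => ?_
    rcases lt_trichotomy i j with h | h | h
    · rw [if_pos h, if_neg (asymm h), if_neg (h.ne'), add_zero]
    · rw [if_neg h.not_lt, if_neg (h ▸ h.symm ▸ lt_irrefl i), if_pos h.symm, add_zero]
    · rw [if_neg (asymm h), if_pos h, if_neg (h.ne), zero_add]
  rw [hsplit, hswap, hcomb]
  have hinner : ∀ i : Fin (m + 2),
      (∑ j : Fin (m + 2), if j = i then 0 else f i j)
        = A i p * (A.submatrix i.succAbove id).det := by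
    intro i
    rw [Fin.sum_univ_succAbove (fun j => if j = i then 0 else f i j) i]
    rw [if_pos rfl, zero_add, expand_col A i q, Finset.mul_sum]
    refine Finset.sum_congr rfl fun r _ => ?_
    rw [if_neg (Fin.succAbove_ne i r), hf]
    ring
  calc ∑ i : Fin (m + 2), ∑ j : Fin (m + 2), (if j = i then 0 else f i j)
      = ∑ i : Fin (m + 2), A i p * (A.submatrix i.succAbove id).det :=
        Finset.sum_congr rfl fun i _ => hinner i
    _ = 0 := sum_col_minor A p

end Core

section Core2
variable {m : ℕ}
open SymAux

def B2 (A : Matrix (Fin (m + 2)) (Fin (m + 1)) (ZMod 2)) : ZMod 2 :=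
  ∑ c : Fin (m + 1), ∑ i : Fin (m + 2), ∑ j : Fin (m + 2),
    if i < j then A i c * A j c * (A.submatrix (skip2 i j) c.succAbove).det else 0

lemma B2_mul_transvection (A : Matrix (Fin (m + 2)) (Fin (m + 1)) (ZMod 2))
    (p q : Fin (m + 1)) (hpq : p ≠ q) (c : ZMod 2) :
    B2 (A * transvection p q c) = B2 A := by
  have hc2 : c * c = c := by revert c; decide
  have hself : ∀ x : ZMod 2, x + x = 0 := by decide
  unfold B2
  have hterm : ∀ (k : Fin (m + 1)) (i j : Fin (m + 2)),
      (if i < j then (A * transvection p q c) i k * (A * transvection p q c) j k *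
        (((A * transvection p q c)).submatrix (skip2 i j) k.succAbove).det else 0)
      = (if i < j then A i k * A j k * (A.submatrix (skip2 i j) k.succAbove).det else 0)
        + (if k = q then (if i < j then c * ((A i p * A j q + A i q * A j p) *
            (A.submatrix (skip2 i j) q.succAbove).det) else 0) else 0)
        + ((if k = q then (if i < j then ((c * c) * (A i p * A j p)) *
              (A.submatrix (skip2 i j) q.succAbove).det else 0) else 0)
          + (if k = p then (if i < j then (c * (A i p * A j p)) *
              (A.submatrix (skip2 i j) q.succAbove).det else 0) else 0)) := by
    intro k i j
    by_cases hij : i < j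
    · simp only [if_pos hij]
      rw [mul_transvection_apply', mul_transvection_apply',
        det_sub_transvection A p q hpq c (skip2 i j) k]
      by_cases hk : k = q
      · subst hk
        simp only [eq_self_iff_true, if_true, if_neg (Ne.symm hpq)]
        ring
      · simp only [if_neg hk]
        by_cases hkp : k = p
        · subst hkp
          simp only [eq_self_iff_true, if_true]
          ring
        · simp only [if_neg hkp]
          ring
    · simp only [if_neg hij]
      simp
  rw [show (∑ k : Fin (m + 1), ∑ i : Fin (m + 2), ∑ j : Fin (m + 2),
      if i < j then (A * transvection p q c) i k * (A * transvection p q c) j k *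
        (((A * transvection p q c)).submatrix (skip2 i j) k.succAbove).det else 0)
      = ∑ k : Fin (m + 1), ∑ i : Fin (m + 2), ∑ j : Fin (m + 2),
        ((if i < j then A i k * A j k * (A.submatrix (skip2 i j) k.succAbove).det else 0)
        + (if k = q then (if i < j then c * ((A i p * A j q + A i q * A j p) *
            (A.submatrix (skip2 i j) q.succAbove).det) else 0) else 0)
        + ((if k = q then (if i < j then ((c * c) * (A i p * A j p)) *
              (A.submatrix (skip2 i j) q.succAbove).det else 0) else 0)
          + (if k = p then (if i < j then (c * (A i p * A j p)) *
              (A.submatrix (skip2 i j) q.succAbove).det else 0) else 0)))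
    from Finset.sum_congr rfl fun k _ => Finset.sum_congr rfl fun i _ =>
      Finset.sum_congr rfl fun j _ => hterm k i j]
  simp only [Finset.sum_add_distrib]
  have pull : ∀ (w : Fin (m + 1)) (G : Fin (m + 2) → Fin (m + 2) → ZMod 2),
      (∑ k : Fin (m + 1), ∑ i : Fin (m + 2), ∑ j : Fin (m + 2),
        if k = w then G i j else 0) = ∑ i : Fin (m + 2), ∑ j : Fin (m + 2), G i j := by
    intro w G
    rw [Finset.sum_eq_single w]
    · simp
    · intro b _ hb
      simp [hb]
    · intro h
      exact absurd (Finset.mem_univ w) h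
  rw [pull q, pull q, pull p]
  have hT2 : (∑ i : Fin (m + 2), ∑ j : Fin (m + 2),
      if i < j then c * ((A i p * A j q + A i q * A j p) *
        (A.submatrix (skip2 i j) q.succAbove).det) else 0) = 0 := by
    have : ∀ i j : Fin (m + 2), (if i < j then c * ((A i p * A j q + A i q * A j p) *
        (A.submatrix (skip2 i j) q.succAbove).det) else 0)
        = c * (if i < j then (A i p * A j q + A i q * A j p) *
            (A.submatrix (skip2 i j) q.succAbove).det else 0) := by
      intro i j
      by_cases h : i < j <;> simp [h]
    calc (∑ i : Fin (m + 2), ∑ j : Fin (m + 2),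
        if i < j then c * ((A i p * A j q + A i q * A j p) *
          (A.submatrix (skip2 i j) q.succAbove).det) else 0)
        = c * ∑ i : Fin (m + 2), ∑ j : Fin (m + 2),
            (if i < j then (A i p * A j q + A i q * A j p) *
              (A.submatrix (skip2 i j) q.succAbove).det else 0) := by
          rw [Finset.mul_sum]
          exact Finset.sum_congr rfl fun i _ => by
            rw [Finset.mul_sum]
            exact Finset.sum_congr rfl fun j _ => this i j
      _ = 0 := by rw [B2_aux_sum A p q, mul_zero]
  rw [hT2, add_zero]
  have hT34 : ((∑ i : Fin (m + 2), ∑ j : Fin (m + 2),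
        if i < j then ((c * c) * (A i p * A j p)) *
          (A.submatrix (skip2 i j) q.succAbove).det else 0)
      + ∑ i : Fin (m + 2), ∑ j : Fin (m + 2),
        if i < j then (c * (A i p * A j p)) *
          (A.submatrix (skip2 i j) q.succAbove).det else 0) = 0 := by
    rw [hc2]
    exact hself _
  rw [hT34, add_zero]
end Core2

section Core3
variable {m : ℕ}
open SymAux

lemma B2_mul_list (A : Matrix (Fin (m + 2)) (Fin (m + 1)) (ZMod 2))
    (L : List (TransvectionStruct (Fin (m + 1)) (ZMod 2))) :
    B2 (A * (L.map TransvectionStruct.toMatrix).prod) = B2 A := by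
  induction L generalizing A with
  | nil => simp
  | cons t L ih =>
    rw [List.map_cons, List.prod_cons, ← Matrix.mul_assoc, ih (A * t.toMatrix)]
    obtain ⟨ti, tj, hij, tc⟩ := t
    rw [TransvectionStruct.toMatrix_mk]
    exact B2_mul_transvection A ti tj hij tc

lemma B2_mul_of_det_one (A : Matrix (Fin (m + 2)) (Fin (m + 1)) (ZMod 2))
    (Q : Matrix (Fin (m + 1)) (Fin (m + 1)) (ZMod 2)) (hQ : Q.det = 1) :
    B2 (A * Q) = B2 A := by
  obtain ⟨L, L', D, h⟩ := Matrix.Pivot.exists_list_transvec_mul_diagonal_mul_list_transvec Q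
  have hdetD : Matrix.det (Matrix.diagonal D) = 1 := by
    have := hQ
    rw [h, Matrix.det_mul, Matrix.det_mul,
      Matrix.TransvectionStruct.det_toMatrix_prod,
      Matrix.TransvectionStruct.det_toMatrix_prod, one_mul, mul_one] at this
    exact this
  have hD1 : ∀ i, D i = 1 := by
    intro i
    rcases (by decide : ∀ x : ZMod 2, x = 0 ∨ x = 1) (D i) with h0 | h1
    · exfalso
      rw [Matrix.det_diagonal] at hdetD
      rw [Finset.prod_eq_zero (Finset.mem_univ i) h0] at hdetD
      exact zero_ne_one hdetD
    · exact h1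
  have hDone : Matrix.diagonal D = 1 := by
    have : D = fun _ => 1 := funext hD1
    rw [this, Matrix.diagonal_one]
  rw [h, hDone, Matrix.mul_one, ← Matrix.mul_assoc]
  rw [B2_mul_list _ L', B2_mul_list _ L]

end Core3


section Final
variable {m : ℕ}
open SymAux

lemma det_cast {n : Type*} [DecidableEq n] [Fintype n] (M : Matrix n n ℤ) :
    ((M.det : ℤ) : ZMod 2) = (M.map (Int.cast : ℤ → ZMod 2)).det := by
  rw [show ((M.det : ℤ) : ZMod 2) = (Int.castRingHom (ZMod 2)) M.det from rfl,
    RingHom.map_det, RingHom.mapMatrix_apply]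
  rfl

lemma Bcoef_cast (A : Matrix (Fin (m + 2)) (Fin (m + 1)) ℤ) :
    ((Bcoef A : ℤ) : ZMod 2) = B2 (A.map (Int.cast : ℤ → ZMod 2)) := by
  unfold Bcoef B2
  push_cast
  refine Finset.sum_congr rfl fun k _ => Finset.sum_congr rfl fun i _ =>
    Finset.sum_congr rfl fun j _ => ?_
  by_cases h : i < j
  · rw [if_pos h, if_pos h]
    push_cast
    have hsub : (A.submatrix (skip2 i j) k.succAbove).map (Int.cast : ℤ → ZMod 2)
        = (A.map (Int.cast : ℤ → ZMod 2)).submatrix (skip2 i j) k.succAbove := by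
      ext r s
      simp
    rw [hsub]
    simp [Matrix.map_apply]
  · rw [if_neg h, if_neg h]

lemma neg_one_zpow_congr {k : Type*} [Field k] {a b : ℤ}
    (h : ((a : ℤ) : ZMod 2) = ((b : ℤ) : ZMod 2)) :
    (-1 : kˣ) ^ a = (-1 : kˣ) ^ b := by
  have hmod : a ≡ b [ZMOD 2] := (ZMod.intCast_eq_intCast_iff _ _ _).mp h
  obtain ⟨t, ht⟩ : (2 : ℤ) ∣ b - a := Int.ModEq.dvd hmod
  have hb : b = a + 2 * t := by omega
  rw [hb, _root_.zpow_add, _root_.zpow_mul]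
  have h2 : ((-1 : kˣ) ^ (2 : ℤ)) = 1 := by
    rw [show (2 : ℤ) = ((2 : ℕ) : ℤ) from rfl, zpow_natCast, neg_one_sq]
  rw [h2, _root_.one_zpow, mul_one]

/-- Invariance of the symbol of monomials under monomial changes of coordinates
`u = t^Q` with `Q ∈ GL(n, ℤ)`: if `f̄ᵢ = cᵢ t^{aᵢ Q}`, so that the exponent matrix of
the new collection is `A * Q`, then `[f̄₀,…,f̄ₙ] = [f₀,…,fₙ]^{det Q}`. -/
theorem monomialSymbol_monomialChange {k : Type*} [Field k] {m : ℕ}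
    (c : Fin (m + 2) → kˣ) (A : Matrix (Fin (m + 2)) (Fin (m + 1)) ℤ)
    (Q : Matrix (Fin (m + 1)) (Fin (m + 1)) ℤ) (hQ : Q.det = 1 ∨ Q.det = -1) :
    monomialSymbol c (A * Q) = monomialSymbol c A ^ Q.det := by
  have hq2 : ((Q.det : ℤ) : ZMod 2) = 1 := by
    rcases hQ with h | h <;> rw [h] <;> decide
  have hdetmap : (Q.map (Int.cast : ℤ → ZMod 2)).det = 1 := by
    rw [← det_cast]
    exact hq2
  have hmap : (A * Q).map (Int.cast : ℤ → ZMod 2)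
      = A.map (Int.cast : ℤ → ZMod 2) * Q.map (Int.cast : ℤ → ZMod 2) := by
    ext r s
    simp [Matrix.mul_apply, Matrix.map_apply]
  have hBmod : (((Bcoef (A * Q) : ℤ)) : ZMod 2) = (((Bcoef A * Q.det : ℤ)) : ZMod 2) := by
    push_cast
    rw [Bcoef_cast, Bcoef_cast, hmap, B2_mul_of_det_one _ _ hdetmap, hdetmap, mul_one]
  have hsub : ∀ i : Fin (m + 2),
      ((A * Q).submatrix i.succAbove id).det = (A.submatrix i.succAbove id).det * Q.det := by
    intro i
    have : (A * Q).submatrix i.succAbove id = A.submatrix i.succAbove id * Q := by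
      ext r s
      simp [Matrix.mul_apply]
    rw [this, Matrix.det_mul]
  unfold monomialSymbol
  rw [mul_zpow, ← _root_.zpow_mul]
  congr 1
  · exact neg_one_zpow_congr hBmod
  · calc (∏ i : Fin (m + 2), c i ^ ((-1 : ℤ) ^ (i : ℕ) * ((A * Q).submatrix i.succAbove id).det))
        = ∏ i : Fin (m + 2),
            (c i ^ ((-1 : ℤ) ^ (i : ℕ) * (A.submatrix i.succAbove id).det)) ^ Q.det := by
          refine Finset.prod_congr rfl fun i _ => ?_
          rw [hsub i, ← _root_.zpow_mul, mul_assoc]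
      _ = (∏ i : Fin (m + 2), c i ^ ((-1 : ℤ) ^ (i : ℕ) * (A.submatrix i.succAbove id).det))
            ^ Q.det := by
          exact Finset.prod_zpow _ _ _

end Final
end

section
/- Let f_i = c_i t^{a_i}, 0 ≤ i ≤ n, be n+1 monomials in n variables over the field k, and let λ_1,…,λ_n ∈ k^× define the translation s = λt of the torus, i.e. s_j = λ_j t_j. Then the symbol is invariant under translations: setting f_i' = c_i λ^{a_i} t^{a_i}, where λ^{a_i} = ∏_{j=1}^n λ_j^{a_{ij}}, one has [f_0',…,f_n'] = [f_0,…,f_n]. -/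
open Matrix

/-! Translating by `λ` multiplies the symbol by `∏ᵢ (λ^{aᵢ})^{(-1)ⁱ Aᵢ} = ∏ⱼ λⱼ^{Σᵢ (-1)ⁱ Aᵢ aᵢⱼ}`,
and each exponent `Σᵢ (-1)ⁱ Aᵢ aᵢⱼ` is the Laplace expansion of the determinant of `A` with its
`j`-th column adjoined once more, hence vanishes. -/

theorem zpow_finset_sum {G ι : Type*} [CommGroup G] (a : G) (s : Finset ι) (f : ι → ℤ) :
    a ^ (∑ i ∈ s, f i) = ∏ i ∈ s, a ^ f i := by
  induction s using Finset.cons_induction with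
  | empty => simp
  | cons i s hi ih => rw [Finset.sum_cons, Finset.prod_cons, _root_.zpow_add, ih]

theorem prod_prod_zpow_zpow_eq_prod_zpow_vecMul {G ι κ : Type*} [CommGroup G]
    [Fintype ι] [Fintype κ] (lam : κ → G) (A : Matrix ι κ ℤ) (e : ι → ℤ) :
    ∏ i, (∏ j, lam j ^ A i j) ^ e i = ∏ j, lam j ^ (e ᵥ* A) j := by
  simp only [vecMul, dotProduct, zpow_finset_sum, ← Finset.prod_zpow, ← _root_.zpow_mul]
  rw [Finset.prod_comm]
  simp only [mul_comm]

namespace Matrix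

variable {R : Type*} [CommRing R] {n : ℕ}

def alternatingMinors (A : Matrix (Fin (n + 1)) (Fin n) R) : Fin (n + 1) → R :=
  fun i => (-1) ^ (i : ℕ) * (A.submatrix i.succAbove id).det

theorem alternatingMinors_vecMul_eq_zero (A : Matrix (Fin (n + 1)) (Fin n) R) :
    alternatingMinors A ᵥ* A = 0 := by
  funext j
  let M : Matrix (Fin (n + 1)) (Fin (n + 1)) R := of fun i => Fin.cons (A i j) (A i)
  calc (alternatingMinors A ᵥ* A) j
      = ∑ i : Fin (n + 1), (-1) ^ (i : ℕ) * M i 0 * (M.submatrix i.succAbove Fin.succ).det := by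
        simp only [vecMul, dotProduct, alternatingMinors]
        exact Finset.sum_congr rfl fun i _ => by rw [mul_right_comm]; rfl
    _ = M.det := (det_succ_column_zero M).symm
    _ = 0 := det_zero_of_column_eq (Fin.succ_ne_zero j).symm fun i => rfl

end Matrix

/-- Invariance of the symbol of monomials under translations `s = λ t` of the torus:
with `fᵢ' = cᵢ λ^{aᵢ} t^{aᵢ}`, where `λ^{aᵢ} = ∏ⱼ λⱼ^{aᵢⱼ}`, one has
`[f₀',…,fₙ'] = [f₀,…,fₙ]`. -/
theorem monomialSymbol_translation {k : Type*} [Field k] {m : ℕ}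
    (c : Fin (m + 2) → kˣ) (A : Matrix (Fin (m + 2)) (Fin (m + 1)) ℤ)
    (lam : Fin (m + 1) → kˣ) :
    monomialSymbol (fun i => c i * ∏ j, lam j ^ A i j) A = monomialSymbol c A := by
  have hprod := prod_prod_zpow_zpow_eq_prod_zpow_vecMul lam A A.alternatingMinors
  rw [A.alternatingMinors_vecMul_eq_zero] at hprod
  simp only [Pi.zero_apply, zpow_zero, Finset.prod_const_one] at hprod
  simp only [monomialSymbol, mul_zpow, Finset.prod_mul_distrib]
  exact congrArg _ (mul_eq_left.mpr hprod)
end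

section
/- Let A be an (n+1)×n integer matrix with rows a_0,…,a_n ∈ ℤ^n, and let Ā denote its reduction modulo 2, a matrix over the field 𝔽_2 = ℤ/2ℤ. If the rank of Ā over 𝔽_2 is strictly less than n, then B(A) ≡ 0 (mod 2). -/
open Matrix

/-!
Reduce modulo 2 and write `B(M) = Σ_c q_{M^c}(m_c)`, where `m_c` is the `c`-th column of `M`,
`M^c` is `M` without it, and `q_N(x) = Σ_{i<j} x_i x_j det N_{ij}`. In characteristic 2, `q_N` is
a quadratic form whose polar form is the two-column Laplace expansion of `det [N | x | y]`, so it
vanishes when `y` is a column of `N`. Together with the linearity of minors in each column, this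
makes `B` invariant under adding one column to another: the two new terms, from columns `p` and
`q`, are both `q_{M^p}(m_q)` and cancel. Over `𝔽₂` a matrix of rank `< n` is brought to one with a
zero column by such operations, and then every term of `B` vanishes.
-/

open Finset

theorem skip2_min_max_succAbove {m : ℕ} (i : Fin (m + 2)) (j : Fin (m + 1)) :
    skip2 (min i (i.succAbove j)) (max i (i.succAbove j)) = i.succAbove ∘ j.succAbove := by
  funext r
  ext
  simp only [skip2, Function.comp_apply, Fin.succAbove, Fin.lt_def, min_def, max_def, Fin.le_def]
  split_ifs <;> simp_all <;> omega

theorem sum_sum_ite_lt_add_swap {ι M : Type*} [Fintype ι] [LinearOrder ι] [AddCommMonoid M]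
    (f : ι → ι → M) :
    ∑ i, ∑ j, (if i < j then f i j + f j i else 0) =
      ∑ i, ∑ j, if i ≠ j then f i j else 0 := by
  have hsplit : ∀ i j, (if i ≠ j then f i j else 0) =
      (if i < j then f i j else 0) + if j < i then f i j else 0 := by
    intro i j
    rcases lt_trichotomy i j with h | rfl | h
    · simp [h, h.ne, h.not_gt]
    · simp
    · simp [h, h.ne', h.not_gt]
  simp only [hsplit, ite_add_zero, sum_add_distrib]
  rw [sum_comm (f := fun i j => if j < i then f i j else 0)]

theorem Matrix.submatrix_updateCol_of_injective {ι κ κ' α : Type*} [DecidableEq κ]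
    [DecidableEq κ'] (M : Matrix ι κ α) {g : κ' → κ} (hg : Function.Injective g) (j : κ')
    (v : ι → α) :
    (M.updateCol (g j) v).submatrix id g = (M.submatrix id g).updateCol j v := by
  ext r s
  simp [updateCol_apply, hg.eq_iff]

theorem Matrix.det_submatrix_eq_of_range_eq {R ι : Type*} [CommRing R] [CharP R 2] {k : ℕ}
    (N : Matrix (Fin k) ι R) {g₁ g₂ : Fin k → ι} (h₁ : Function.Injective g₁)
    (h₂ : Function.Injective g₂) (hrange : Set.range g₁ = Set.range g₂) :
    (N.submatrix id g₁).det = (N.submatrix id g₂).det := by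
  let e : Fin k ≃ Fin k := (Equiv.ofInjective g₂ h₂).trans
    ((Equiv.setCongr hrange.symm).trans (Equiv.ofInjective g₁ h₁).symm)
  have he : g₂ = g₁ ∘ e := by
    funext x
    simp [e, Equiv.apply_ofInjective_symm]
  rw [he, show N.submatrix id (g₁ ∘ e) = (N.submatrix id g₁).submatrix id e from rfl,
    det_permute']
  rcases Int.units_eq_one_or (Equiv.Perm.sign e) with h | h <;> simp [h, CharTwo.neg_eq]

theorem Matrix.det_of_snoc_eq_sum {R : Type*} [CommRing R] [CharP R 2] {m : ℕ}
    (N : Matrix (Fin (m + 1)) (Fin m) R) (v : Fin (m + 1) → R) :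
    (of fun r => Fin.snoc (α := fun _ => R) (N r) (v r)).det =
      ∑ j, v j * (N.submatrix j.succAbove id).det := by
  rw [det_succ_column _ (Fin.last m)]
  refine sum_congr rfl fun j _ => ?_
  simp only [CharTwo.neg_eq, one_pow, one_mul, of_apply, Fin.snoc_last, Fin.succAbove_last]
  congr 2
  ext r s
  simp

section

variable {R : Type*} [CommRing R]

def quadMinor {m : ℕ} (N : Matrix (Fin (m + 2)) (Fin m) R) (x : Fin (m + 2) → R) : R :=
  ∑ i, ∑ j, if i < j then x i * x j * (N.submatrix (skip2 i j) id).det else 0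

def polarMinor {m : ℕ} (N : Matrix (Fin (m + 2)) (Fin m) R) (x y : Fin (m + 2) → R) : R :=
  ∑ i, ∑ j, if i < j then (x i * y j + x j * y i) * (N.submatrix (skip2 i j) id).det else 0

def bForm {m : ℕ} (M : Matrix (Fin (m + 2)) (Fin (m + 1)) R) : R :=
  ∑ c, quadMinor (M.submatrix id c.succAbove) fun i => M i c

theorem quadMinor_add {m : ℕ} (N : Matrix (Fin (m + 2)) (Fin m) R) (x y : Fin (m + 2) → R) :
    quadMinor N (x + y) = quadMinor N x + quadMinor N y + polarMinor N x y := by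
  simp only [quadMinor, polarMinor, ← sum_add_distrib]
  refine sum_congr rfl fun i _ => sum_congr rfl fun j _ => ?_
  split_ifs
  · simp only [Pi.add_apply]; ring
  · simp

theorem polarMinor_eq_sum_succAbove {m : ℕ} (N : Matrix (Fin (m + 2)) (Fin m) R)
    (x y : Fin (m + 2) → R) :
    polarMinor N x y =
      ∑ i, x i * ∑ j, y (i.succAbove j) *
        ((N.submatrix i.succAbove id).submatrix j.succAbove id).det := by
  let D : Fin (m + 2) → Fin (m + 2) → R := fun i j =>
    (N.submatrix (skip2 (min i j) (max i j)) id).det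
  have hpolar : polarMinor N x y = ∑ i, ∑ j,
      if i < j then x i * y j * D i j + x j * y i * D j i else 0 := by
    refine sum_congr rfl fun i _ => sum_congr rfl fun j _ => ?_
    split_ifs with h
    · simp only [D, min_eq_left h.le, max_eq_right h.le, min_eq_right h.le, max_eq_left h.le]
      ring
    · rfl
  rw [hpolar, sum_sum_ite_lt_add_swap (fun i j => x i * y j * D i j)]
  refine sum_congr rfl fun i _ => ?_
  rw [Fin.sum_univ_succAbove _ i, mul_sum]
  simp [D, skip2_min_max_succAbove, mul_assoc]

theorem polarMinor_col_eq_zero [CharP R 2] {m : ℕ} (N : Matrix (Fin (m + 2)) (Fin m) R)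
    (x : Fin (m + 2) → R) (l : Fin m) : polarMinor N x (fun r => N r l) = 0 := by
  rw [polarMinor_eq_sum_succAbove]
  refine sum_eq_zero fun i _ => ?_
  rw [← det_of_snoc_eq_sum, det_zero_of_column_eq (Fin.castSucc_lt_last l).ne fun _ => by simp,
    mul_zero]

theorem quadMinor_updateCol_add {m : ℕ} (N : Matrix (Fin (m + 2)) (Fin m) R) (l : Fin m)
    (w x : Fin (m + 2) → R) :
    quadMinor (N.updateCol l fun r => N r l + w r) x =
      quadMinor N x + quadMinor (N.updateCol l w) x := by
  simp only [quadMinor, ← sum_add_distrib]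
  refine sum_congr rfl fun i _ => sum_congr rfl fun j _ => ?_
  split_ifs
  · have hsub : ∀ v : Fin (m + 2) → R, (N.updateCol l v).submatrix (skip2 i j) id =
        (N.submatrix (skip2 i j) id).updateCol l fun r => v (skip2 i j r) := by
      intro v; ext r s; simp [updateCol_apply]
    rw [hsub, hsub, ← mul_add]
    congr 1
    exact (det_updateCol_add (N.submatrix (skip2 i j) id) l
      (fun r => (N.submatrix (skip2 i j) id) r l) _).trans (by rw [updateCol_eq_self])
  · simp

theorem quadMinor_eq_zero_of_col_eq {m : ℕ} (N : Matrix (Fin (m + 2)) (Fin m) R) {a b : Fin m}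
    (hab : a ≠ b) (h : ∀ r, N r a = N r b) (x : Fin (m + 2) → R) : quadMinor N x = 0 :=
  sum_eq_zero fun i _ => sum_eq_zero fun j _ => by
    rw [det_zero_of_column_eq (M := N.submatrix (skip2 i j) id) hab fun r => h _, mul_zero,
      ite_self]

theorem Matrix.det_submatrix_succAbove_eq_of_col_eq {R : Type*} [CommRing R] [CharP R 2]
    {m : ℕ} (K : Matrix (Fin m) (Fin (m + 1)) R) {p q : Fin (m + 1)} (h : ∀ r, K r p = K r q) :
    (K.submatrix id p.succAbove).det = (K.submatrix id q.succAbove).det := by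
  have hswap : K.submatrix id (Equiv.swap p q) = K := by
    ext r c
    rcases eq_or_ne c p with rfl | hp
    · simp [h]
    rcases eq_or_ne c q with rfl | hq
    · simp [h]
    · simp [Equiv.swap_apply_of_ne_of_ne hp hq]
  have hrange : Set.range p.succAbove = Set.range (Equiv.swap p q ∘ q.succAbove) := by
    rw [Set.range_comp, Fin.range_succAbove, Fin.range_succAbove,
      Set.image_compl_eq (Equiv.bijective _), Set.image_singleton, Equiv.swap_apply_right]
  calc (K.submatrix id p.succAbove).det
      = (K.submatrix id (Equiv.swap p q ∘ q.succAbove)).det :=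
        det_submatrix_eq_of_range_eq K Fin.succAbove_right_injective
          ((Equiv.injective _).comp Fin.succAbove_right_injective) hrange
    _ = (K.submatrix id q.succAbove).det :=
        congrArg (fun L => (L.submatrix id q.succAbove).det) hswap

theorem quadMinor_submatrix_succAbove_eq_of_col_eq [CharP R 2] {m : ℕ}
    (K : Matrix (Fin (m + 2)) (Fin (m + 1)) R) {p q : Fin (m + 1)} (h : ∀ r, K r p = K r q)
    (x : Fin (m + 2) → R) :
    quadMinor (K.submatrix id p.succAbove) x = quadMinor (K.submatrix id q.succAbove) x :=
  sum_congr rfl fun i _ => sum_congr rfl fun j _ =>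
    congrArg (fun d => if i < j then x i * x j * d else 0)
      ((K.submatrix (skip2 i j) id).det_submatrix_succAbove_eq_of_col_eq fun _ => h _)

theorem quadMinor_submatrix_updateCol_add {m : ℕ} (M : Matrix (Fin (m + 2)) (Fin (m + 1)) R)
    {c p : Fin (m + 1)} (hcp : c ≠ p) (w x : Fin (m + 2) → R) :
    quadMinor ((M.updateCol p fun r => M r p + w r).submatrix id c.succAbove) x =
      quadMinor (M.submatrix id c.succAbove) x +
        quadMinor ((M.updateCol p w).submatrix id c.succAbove) x := by
  obtain ⟨p', rfl⟩ := Fin.exists_succAbove_eq hcp.symm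
  rw [submatrix_updateCol_of_injective _ Fin.succAbove_right_injective,
    submatrix_updateCol_of_injective _ Fin.succAbove_right_injective]
  exact quadMinor_updateCol_add _ p' w x

theorem bForm_updateCol_add [CharP R 2] {m : ℕ} (M : Matrix (Fin (m + 2)) (Fin (m + 1)) R)
    {p q : Fin (m + 1)} (hqp : q ≠ p) :
    bForm (M.updateCol p fun r => M r p + M r q) = bForm M := by
  obtain ⟨q', hq'⟩ := Fin.exists_succAbove_eq hqp
  let K := M.updateCol p fun r => M r q
  let Q := quadMinor (M.submatrix id p.succAbove) fun r => M r q
  have hterm_p : quadMinor ((M.updateCol p fun r => M r p + M r q).submatrix id p.succAbove)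
        (fun r => (M.updateCol p fun r => M r p + M r q) r p) =
      quadMinor (M.submatrix id p.succAbove) (fun r => M r p) + Q := by
    have hpolar :
        polarMinor (M.submatrix id p.succAbove) (fun r => M r p) (fun r => M r q) = 0 := by
      simpa [hq'] using polarMinor_col_eq_zero (M.submatrix id p.succAbove) (fun r => M r p) q'
    rw [submatrix_updateCol_succAbove]
    simp only [updateCol_self]
    exact (quadMinor_add _ (fun r => M r p) (fun r => M r q)).trans (by rw [hpolar, add_zero])
  have hterm_ne : ∀ c ≠ p,
      quadMinor ((M.updateCol p fun r => M r p + M r q).submatrix id c.succAbove)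
        (fun r => (M.updateCol p fun r => M r p + M r q) r c) =
      quadMinor (M.submatrix id c.succAbove) (fun r => M r c) +
        quadMinor (K.submatrix id c.succAbove) (fun r => M r c) := by
    intro c hc
    simp only [updateCol_ne hc]
    exact quadMinor_submatrix_updateCol_add M hc _ _
  have hKq : quadMinor (K.submatrix id q.succAbove) (fun r => M r q) = Q := by
    rw [← quadMinor_submatrix_succAbove_eq_of_col_eq K (p := p) (by simp [K, updateCol_ne hqp]),
      submatrix_updateCol_succAbove]
  have hK : ∀ c, c ≠ p ∧ c ≠ q →
      quadMinor (K.submatrix id c.succAbove) (fun r => M r c) = 0 := by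
    rintro c ⟨hcp, hcq⟩
    obtain ⟨p₀, hp₀⟩ := Fin.exists_succAbove_eq hcp.symm
    obtain ⟨q₀, hq₀⟩ := Fin.exists_succAbove_eq hcq.symm
    refine quadMinor_eq_zero_of_col_eq _ (a := p₀) (b := q₀) ?_ ?_ _
    · rintro rfl; exact hqp (hq₀.symm.trans hp₀)
    · intro r; simp [K, hp₀, hq₀, updateCol_apply]
  rw [← sub_eq_zero, bForm, bForm, ← sum_sub_distrib, Fintype.sum_eq_add p q hqp.symm,
    hterm_p, hterm_ne q hqp, hKq, add_sub_cancel_left, add_sub_cancel_left,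
    CharTwo.add_self_eq_zero]
  rintro c hc
  rw [hterm_ne c hc.1, hK c hc, add_zero, sub_self]

theorem bForm_updateCol_add_sum [CharP R 2] {m : ℕ} (M : Matrix (Fin (m + 2)) (Fin (m + 1)) R)
    {k : Fin (m + 1)} {t : Finset (Fin (m + 1))} (hk : k ∉ t) :
    bForm (M.updateCol k fun r => M r k + ∑ l ∈ t, M r l) = bForm M := by
  induction t using Finset.induction_on with
  | empty => simp [updateCol_eq_self]
  | @insert a s ha ih =>
    have hka : a ≠ k := fun h => hk (h ▸ mem_insert_self a s)
    rw [← ih fun h => hk (mem_insert_of_mem h),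
      ← bForm_updateCol_add (M.updateCol k fun r => M r k + ∑ l ∈ s, M r l) hka,
      updateCol_idem]
    simp [sum_insert ha, updateCol_ne hka, add_comm, add_left_comm]

theorem bForm_eq_zero_of_col_eq_zero {m : ℕ} (M : Matrix (Fin (m + 2)) (Fin (m + 1)) R)
    (k : Fin (m + 1)) (h : ∀ r, M r k = 0) : bForm M = 0 := by
  refine sum_eq_zero fun c _ => ?_
  rcases eq_or_ne c k with rfl | hck
  · simp [quadMinor, h]
  · obtain ⟨k', hk'⟩ := Fin.exists_succAbove_eq hck.symm
    refine sum_eq_zero fun i _ => sum_eq_zero fun j _ => ?_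
    rw [det_eq_zero_of_column_eq_zero k' fun r => by simp [hk', h], mul_zero, ite_self]

theorem Matrix.exists_mulVec_eq_zero_of_rank_lt {K ι κ : Type*} [Field K] [Fintype κ]
    (M : Matrix ι κ K) (h : M.rank < Fintype.card κ) : ∃ v ≠ 0, M *ᵥ v = 0 := by
  have hnullity := LinearMap.finrank_range_add_finrank_ker M.mulVecLin
  rw [Module.finrank_fintype_fun_eq_card] at hnullity
  have hker : LinearMap.ker M.mulVecLin ≠ ⊥ := fun hbot => by
    rw [hbot, finrank_bot] at hnullity
    exact h.ne hnullity
  obtain ⟨v, hv, hv0⟩ := Submodule.exists_mem_ne_zero_of_ne_bot hker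
  exact ⟨v, hv0, hv⟩

theorem Matrix.exists_col_add_sum_eq_zero_of_rank_lt {ι κ : Type*} [Fintype κ] [DecidableEq κ]
    (M : Matrix ι κ (ZMod 2)) (h : M.rank < Fintype.card κ) :
    ∃ k, ∃ t : Finset κ, k ∉ t ∧ ∀ r, M r k + ∑ l ∈ t, M r l = 0 := by
  obtain ⟨v, hv0, hv⟩ := M.exists_mulVec_eq_zero_of_rank_lt h
  obtain ⟨k, hk⟩ : ∃ k, v k ≠ 0 := Function.ne_iff.mp hv0
  have hunit : ∀ x : ZMod 2, x ≠ 0 → x = 1 := by decide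
  refine ⟨k, (univ.filter fun l => v l ≠ 0).erase k, notMem_erase k _, fun r => ?_⟩
  rw [add_sum_erase _ (M r) (mem_filter.2 ⟨mem_univ _, hk⟩), sum_filter]
  calc ∑ l, (if v l ≠ 0 then M r l else 0) = (M *ᵥ v) r :=
        sum_congr rfl fun l _ => by by_cases hl : v l = 0 <;> simp [hl, hunit]
    _ = 0 := by rw [hv, Pi.zero_apply]

theorem bForm_eq_zero_of_rank_lt {m : ℕ} (M : Matrix (Fin (m + 2)) (Fin (m + 1)) (ZMod 2))
    (h : M.rank < m + 1) : bForm M = 0 := by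
  obtain ⟨k, t, hk, hcol⟩ := M.exists_col_add_sum_eq_zero_of_rank_lt (by simpa using h)
  rw [← bForm_updateCol_add_sum M hk]
  exact bForm_eq_zero_of_col_eq_zero _ k fun r => by simp [hcol]

theorem RingHom.map_bForm {S : Type*} [CommRing S] (f : R →+* S) {m : ℕ}
    (M : Matrix (Fin (m + 2)) (Fin (m + 1)) R) : f (bForm M) = bForm (M.map f) := by
  simp [bForm, quadMinor, apply_ite f, RingHom.map_det, submatrix_map]

end

theorem Bcoef_eq_bForm {m : ℕ} (A : Matrix (Fin (m + 2)) (Fin (m + 1)) ℤ) : Bcoef A = bForm A :=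
  rfl

/-- If the reduction of `A` modulo `2` has rank strictly less than `n` over
`𝔽₂ = ℤ/2ℤ`, then `B(A) ≡ 0 (mod 2)`. -/
theorem Bcoef_eq_zero_of_rank_lt {m : ℕ} (A : Matrix (Fin (m + 2)) (Fin (m + 1)) ℤ)
    (h : (A.map (fun x : ℤ => (x : ZMod 2))).rank < m + 1) :
    Bcoef A ≡ 0 [ZMOD 2] := by
  have hcast : ((Bcoef A : ℤ) : ZMod 2) = 0 := by
    rw [Bcoef_eq_bForm]
    exact ((Int.castRingHom (ZMod 2)).map_bForm A).trans (bForm_eq_zero_of_rank_lt _ h)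
  exact Int.modEq_zero_iff_dvd.2 ((ZMod.intCast_zmod_eq_zero_iff_dvd _ 2).1 hcast)
end
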